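/- With h_{ik} as in the Kleinian change of variables (h_{ik} = 4℘_{i−1,k−1} − 2℘_{k,i−2} − 2℘_{i,k−2} + (1/2)(δ_{ik}(λ_{2i−2}+λ_{2k−2}) + δ_{k,i+1}λ_{2i−1} + δ_{i,k+1}λ_{2k−1})), for every level L with 2 ≤ L ≤ 2g+4 one has Σ_{i=1}^{L−1} h_{i,L−i} = λ_{L−2} (interpreting λ_m = 0 for m outside {0,…,2g+2} and h_{ik}=0 for indices outside {1,…,g+2}). -/
import Mathlib


open Finset

/-- The anti-diagonal sums of the matrix `h` recover the coefficients λ: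
`∑_{i=1}^{L−1} h_{i,L−i} = λ_{L−2}` for all `2 ≤ L ≤ 2g+4` (indices 1-based, with
`h_{ik} = 0` outside `1 ≤ i,k ≤ g+2` and `λ_m = 0` for `m > 2g+2`). -/
theorem antidiagonal_sums_h (g : ℕ) (hg : 1 ≤ g)
    (P : ℕ → ℕ → ℂ)
    (hPsymm : ∀ j l, P j l = P l j)
    (hP0 : ∀ j l, (j < 1 ∨ g < j ∨ l < 1 ∨ g < l) → P j l = 0)
    (lam : ℕ → ℂ) (hlam0 : ∀ m, 2*g+2 < m → lam m = 0)
    (h : ℕ → ℕ → ℂ)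
    (hh : ∀ i k : ℕ, h i k =
      if 1 ≤ i ∧ i ≤ g+2 ∧ 1 ≤ k ∧ k ≤ g+2 then
        4 * P (i-1) (k-1) - 2 * P k (i-2) - 2 * P i (k-2)
        + (1/2) * ((if i = k then lam (2*i-2) + lam (2*k-2) else 0)
          + (if k = i+1 then lam (2*i-1) else 0)
          + (if i = k+1 then lam (2*k-1) else 0))
      else 0) :
    ∀ L : ℕ, 2 ≤ L → L ≤ 2*g+4 →
      (∑ i ∈ Finset.Icc 1 (L-1), h i (L-i)) = lam (L-2) := by
  intro L hL2 hL4
  obtain ⟨m, rfl⟩ : ∃ m, L = m + 2 := ⟨L - 2, by omega⟩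
  simp only [Nat.add_sub_cancel]
  -- G is the "canonical" antidiagonal entry of P
  set G : ℕ → ℂ := fun j => P (j - 1) (m + 1 - j) with hG
  have hG0 : G 0 = 0 := hP0 _ _ (by left; omega)
  have hG1 : G 1 = 0 := hP0 _ _ (by left; omega)
  have hGtop : G (m + 1) = 0 := hP0 _ _ (by right; right; left; omega)
  have hGtop2 : G (m + 2) = 0 := hP0 _ _ (by right; right; left; omega)
  -- rewrite each summand unconditionally
  have key : ∀ i ∈ Finset.Icc 1 (m + 1), h i (m + 2 - i) =
      (4 * G i - 2 * G (i - 1) - 2 * G (i + 1))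
      + (1/2) * ((if i = m + 2 - i then lam (2*i-2) + lam (2*(m+2-i)-2) else 0)
          + (if m + 2 - i = i+1 then lam (2*i-1) else 0)
          + (if i = (m + 2 - i)+1 then lam (2*(m+2-i)-1) else 0)) := by
    intro i hi
    simp only [Finset.mem_Icc] at hi
    have hGi : G i = P (i - 1) (m + 2 - i - 1) := by
      simp only [hG]; congr 1; omega
    have hGim : G (i - 1) = P (m + 2 - i) (i - 2) := by
      simp only [hG]; rw [hPsymm]; congr 1 <;> omega
    have hGip : G (i + 1) = P i (m + 2 - i - 2) := by
      simp only [hG]; congr 1 <;> omega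
    rw [hh]
    by_cases hc : 1 ≤ i ∧ i ≤ g+2 ∧ 1 ≤ m + 2 - i ∧ m + 2 - i ≤ g+2
    · rw [if_pos hc, hGi, hGim, hGip]
    · rw [if_neg hc]
      -- out of range: every term vanishes
      have hrange : g + 2 < i ∨ g + 2 < m + 2 - i := by omega
      have p1 : P (i - 1) (m + 2 - i - 1) = 0 := hP0 _ _ (by omega)
      have p2 : P (m + 2 - i) (i - 2) = 0 := hP0 _ _ (by omega)
      have p3 : P i (m + 2 - i - 2) = 0 := hP0 _ _ (by omega)
      rw [hGi, hGim, hGip, p1, p2, p3]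
      have z1 : (if i = m + 2 - i then lam (2*i-2) + lam (2*(m+2-i)-2) else 0) = 0 := by
        split_ifs with hq
        · rw [hlam0 _ (by omega), hlam0 _ (by omega)]; ring
        · rfl
      have z2 : (if m + 2 - i = i+1 then lam (2*i-1) else 0) = 0 := by
        split_ifs with hq
        · exact hlam0 _ (by omega)
        · rfl
      have z3 : (if i = (m + 2 - i)+1 then lam (2*(m+2-i)-1) else 0) = 0 := by
        split_ifs with hq
        · exact hlam0 _ (by omega)
        · rfl
      rw [z1, z2, z3]; ring
  rw [show m + 2 - 1 = m + 1 by omega, Finset.sum_congr rfl key, Finset.sum_add_distrib]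
  -- the P-part telescopes to zero
  have shiftIcc : ∀ f : ℕ → ℂ, ∑ i ∈ Finset.Icc 1 (m + 1), f i
      = ∑ i ∈ Finset.range (m + 1), f (1 + i) := by
    intro f
    rw [← Finset.Ico_add_one_right_eq_Icc, Finset.sum_Ico_eq_sum_range]
    rfl
  have hA : ∑ i ∈ Finset.Icc 1 (m + 1), G (i - 1)
      = ∑ i ∈ Finset.Icc 1 (m + 1), G i := by
    rw [shiftIcc, shiftIcc]
    have l1 : ∑ i ∈ Finset.range (m + 1), G (1 + i - 1)
        = ∑ i ∈ Finset.range (m + 1), G i := by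
      apply Finset.sum_congr rfl; intro i _; congr 1; omega
    rw [l1, Finset.sum_range_succ' (fun i => G i) m,
      Finset.sum_range_succ (fun i => G (1 + i)) m, hG0]
    have l2 : G (1 + m) = 0 := by rwa [Nat.add_comm]
    rw [l2]
    simp [Nat.add_comm]
  have hB : ∑ i ∈ Finset.Icc 1 (m + 1), G (i + 1)
      = ∑ i ∈ Finset.Icc 1 (m + 1), G i := by
    rw [shiftIcc, shiftIcc]
    rw [Finset.sum_range_succ' (fun i => G (1 + i)) m,
      Finset.sum_range_succ (fun i => G (1 + i + 1)) m]
    have l1 : G (1 + 0) = 0 := hG1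
    have l2 : G (1 + m + 1) = 0 := by
      have : 1 + m + 1 = m + 2 := by omega
      rw [this]; exact hGtop2
    rw [l1, l2]
    simp only [Nat.add_assoc]
  have hPpart : ∑ i ∈ Finset.Icc 1 (m + 1),
      (4 * G i - 2 * G (i - 1) - 2 * G (i + 1)) = 0 := by
    rw [Finset.sum_sub_distrib, Finset.sum_sub_distrib, ← Finset.mul_sum,
      ← Finset.mul_sum, ← Finset.mul_sum, hA, hB]
    ring
  rw [hPpart]
  -- the delta part
  have hDelta : ∑ i ∈ Finset.Icc 1 (m + 1),
      ((if i = m + 2 - i then lam (2*i-2) + lam (2*(m+2-i)-2) else 0)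
        + (if m + 2 - i = i+1 then lam (2*i-1) else 0)
        + (if i = (m + 2 - i)+1 then lam (2*(m+2-i)-1) else 0)) = 2 * lam m := by
    rcases Nat.even_or_odd m with ⟨t, ht⟩ | ⟨t, ht⟩
    · -- m = 2t, L even, center i = t+1
      have congr1 : ∀ i ∈ Finset.Icc 1 (m + 1),
          ((if i = m + 2 - i then lam (2*i-2) + lam (2*(m+2-i)-2) else 0)
            + (if m + 2 - i = i+1 then lam (2*i-1) else 0)
            + (if i = (m + 2 - i)+1 then lam (2*(m+2-i)-1) else 0))
          = (if i = t + 1 then lam m + lam m else 0) := by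
        intro i hi
        simp only [Finset.mem_Icc] at hi
        rcases eq_or_ne i (t + 1) with rfl | hne
        · rw [if_pos rfl, if_pos (by omega), if_neg (by omega), if_neg (by omega)]
          have e1 : 2*(t+1)-2 = m := by omega
          have e2 : 2*(m+2-(t+1))-2 = m := by omega
          rw [e1, e2]; ring
        · rw [if_neg hne, if_neg (by omega), if_neg (by omega), if_neg (by omega)]
          ring
      rw [Finset.sum_congr rfl congr1,
        Finset.sum_ite_eq' (Finset.Icc 1 (m+1)) (t+1) (fun _ => lam m + lam m),
        if_pos (by simp only [Finset.mem_Icc]; omega)]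
      ring
    · -- m = 2t+1, L odd, centers t+1 and t+2
      have congr1 : ∀ i ∈ Finset.Icc 1 (m + 1),
          ((if i = m + 2 - i then lam (2*i-2) + lam (2*(m+2-i)-2) else 0)
            + (if m + 2 - i = i+1 then lam (2*i-1) else 0)
            + (if i = (m + 2 - i)+1 then lam (2*(m+2-i)-1) else 0))
          = (if i = t + 1 then lam m else 0) + (if i = t + 2 then lam m else 0) := by
        intro i hi
        simp only [Finset.mem_Icc] at hi
        rcases eq_or_ne i (t + 1) with rfl | hne1
        · rw [if_pos rfl, if_neg (by omega), if_pos (by omega), if_neg (by omega),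
            if_neg (by omega)]
          have e1 : 2*(t+1)-1 = m := by omega
          rw [e1]; ring
        rcases eq_or_ne i (t + 2) with rfl | hne2
        · rw [if_neg hne1, if_pos rfl, if_neg (by omega), if_neg (by omega),
            if_pos (by omega)]
          have e1 : 2*(m+2-(t+2))-1 = m := by omega
          rw [e1]; ring
        · rw [if_neg hne1, if_neg hne2, if_neg (by omega), if_neg (by omega),
            if_neg (by omega)]
          ring
      rw [Finset.sum_congr rfl congr1, Finset.sum_add_distrib,
        Finset.sum_ite_eq' (Finset.Icc 1 (m+1)) (t+1) (fun _ => lam m),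
        Finset.sum_ite_eq' (Finset.Icc 1 (m+1)) (t+2) (fun _ => lam m),
        if_pos (by simp only [Finset.mem_Icc]; omega),
        if_pos (by simp only [Finset.mem_Icc]; omega)]
      ring
  rw [← Finset.mul_sum, hDelta]
  ring
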